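/- arXiv:1403.5667 — 2 statements merged into one kernel-verified Lean document; each statement's English description precedes it below -/
import Mathlib

section
/- For the HREM, the quenched free energy sequence is non-decreasing in system size: f_{k+1} ≥ f_k for all k ≥ 0 and all β ≥ 0. -/
open MeasureTheory ProbabilityTheory Real Filter

/-- A configuration of `2 ^ n` Ising spins (each spin is a Boolean). -/
abbrev Cfg (n : ℕ) : Type := Fin (2 ^ n) → Bool

/-- The left half of a spin configuration. -/
def blkL {n : ℕ} (S : Cfg (n + 1)) : Cfg n :=
  fun i => S ⟨i.1, lt_of_lt_of_le i.2 (Nat.pow_le_pow_right (by norm_num) (Nat.le_succ n))⟩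

/-- The right half of a spin configuration. -/
def blkR {n : ℕ} (S : Cfg (n + 1)) : Cfg n :=
  fun i => S ⟨2 ^ n + i.1, by have := i.2; rw [pow_succ]; omega⟩

variable {Ω : Type} [MeasurableSpace Ω]

/-- The Hamiltonian of the hierarchical random energy model (HREM), defined recursively:
`H_{n+1}[S] = H_n¹[S₁] + H_n²[S₂] + 2^{(n+1)(1-σ)/2} ε_{n+1}[S]`, `H_0[S] = ε_0[S]`,
where the second argument indexes the hierarchical block (the two sub-blocks of block `j`
are `2j` and `2j+1`), so that the two half-Hamiltonians use disjoint (hence independent)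
families of random energies. -/
noncomputable def hremH (σ : ℝ) (ε : ∀ l : ℕ, ℕ → Cfg l → Ω → ℝ) :
    ∀ n : ℕ, ℕ → Cfg n → Ω → ℝ
  | 0 => fun j S => ε 0 j S
  | (n + 1) => fun j S ω =>
      hremH σ ε n (2 * j) (blkL S) ω + hremH σ ε n (2 * j + 1) (blkR S) ω
        + (2 : ℝ) ^ (((n : ℝ) + 1) * (1 - σ) / 2) * ε (n + 1) j S ω

/-- The partition function `Z_n = ∑_S exp (-β H_n[S])` of the HREM. -/
noncomputable def hremZ (σ : ℝ) (ε : ∀ l : ℕ, ℕ → Cfg l → Ω → ℝ) (β : ℝ) (n : ℕ)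
    (ω : Ω) : ℝ :=
  ∑ S : Cfg n, Real.exp (-β * hremH σ ε n 0 S ω)

/-- The quenched free energy `f_n = 2^{-n} E[log Z_n]` of the HREM. -/
noncomputable def hremF (σ : ℝ) (ε : ∀ l : ℕ, ℕ → Cfg l → Ω → ℝ) (μ : Measure Ω)
    (β : ℝ) (n : ℕ) : ℝ :=
  ((2 : ℝ) ^ n)⁻¹ * ∫ ω, Real.log (hremZ σ ε β n ω) ∂μ

/-!
Write `Z_{n+1} = ∑_S w_S e^{t_S}`, where `w_S` is the Boltzmann weight of the two halves of `S`
and `t_S` comes from the top-level energy `ε_{n+1}[S]`. Since `∑_S w_S = Z_n¹ Z_n²`, Cauchy–Schwarz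
gives `(Z_n¹ Z_n²)² ≤ Z_{n+1} Z̃_{n+1}`, where `Z̃_{n+1}` has the top-level energies negated.
Negating some energies, or relabelling them injectively, keeps them i.i.d. standard Gaussian, and
`E log Z` only depends on that law (push it forward to the infinite product of Gaussians). Hence
`E log Z_n¹ = E log Z_n² = E log Z_n` and `E log Z̃_{n+1} = E log Z_{n+1}`, so taking
`E log` gives `2 E log Z_n ≤ E log Z_{n+1}`.
-/

structure IsStdGaussianIID {ι : Type*} (X : ι → Ω → ℝ) (μ : Measure Ω) : Prop where
  measurable : ∀ i, Measurable (X i)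
  map_eq : ∀ i, μ.map (X i) = gaussianReal 0 1
  indep : iIndepFun X μ

namespace IsStdGaussianIID

variable {ι : Type*} {X : ι → Ω → ℝ} {μ : Measure Ω}

lemma isProbabilityMeasure (h : IsStdGaussianIID X μ) : IsProbabilityMeasure μ :=
  h.indep.isProbabilityMeasure

lemma integrable (h : IsStdGaussianIID X μ) (i : ι) : Integrable (X i) μ := by
  have hid : Integrable id (μ.map (X i)) := by
    rw [h.map_eq i]
    exact (memLp_id_gaussianReal 1).integrable le_rfl
  exact (integrable_map_measure aestronglyMeasurable_id (h.measurable i).aemeasurable).mp hid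

lemma precomp {κ : Type*} {g : κ → ι} (hg : Function.Injective g) (h : IsStdGaussianIID X μ) :
    IsStdGaussianIID (fun k => X (g k)) μ :=
  ⟨fun k => h.measurable (g k), fun k => h.map_eq (g k), h.indep.precomp hg⟩

lemma comp_of_map_eq {f : ι → ℝ → ℝ} (hf : ∀ i, Measurable (f i))
    (hfg : ∀ i, (gaussianReal 0 1).map (f i) = gaussianReal 0 1) (h : IsStdGaussianIID X μ) :
    IsStdGaussianIID (fun i ω => f i (X i ω)) μ where
  measurable i := (hf i).comp (h.measurable i)
  map_eq i := by
    change μ.map (f i ∘ X i) = _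
    rw [← Measure.map_map (hf i) (h.measurable i), h.map_eq i, hfg i]
  indep := h.indep.comp f hf

lemma map_eq_infinitePi (h : IsStdGaussianIID X μ) :
    μ.map (fun ω i => X i ω) = Measure.infinitePi fun _ : ι => gaussianReal 0 1 := by
  rw [h.indep.map_fun_eq_infinitePi_map h.measurable]
  simp only [h.map_eq]

lemma integral_comp_eq {Ω' : Type} [MeasurableSpace Ω'] {ν : Measure Ω'} {Y : ι → Ω' → ℝ}
    (hX : IsStdGaussianIID X μ) (hY : IsStdGaussianIID Y ν) {G : (ι → ℝ) → ℝ}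
    (hG : Measurable G) :
    ∫ ω, G (fun i => X i ω) ∂μ = ∫ ω, G (fun i => Y i ω) ∂ν := by
  rw [← integral_map (measurable_pi_lambda _ hX.measurable).aemeasurable hG.aestronglyMeasurable,
    ← integral_map (measurable_pi_lambda _ hY.measurable).aemeasurable hG.aestronglyMeasurable,
    hX.map_eq_infinitePi, hY.map_eq_infinitePi]

end IsStdGaussianIID

lemma sq_sum_le_sum_mul_exp_mul_sum_mul_exp_neg {γ : Type*} (s : Finset γ) {w : γ → ℝ}
    (hw : ∀ i ∈ s, 0 ≤ w i) (t : γ → ℝ) :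
    (∑ i ∈ s, w i) ^ 2 ≤ (∑ i ∈ s, w i * exp (t i)) * ∑ i ∈ s, w i * exp (-t i) := by
  refine Finset.sum_sq_le_sum_mul_sum_of_sq_le_mul s (fun i hi => by have := hw i hi; positivity)
    (fun i hi => by have := hw i hi; positivity) fun i _ => le_of_eq ?_
  rw [mul_mul_mul_comm, ← exp_add, add_neg_cancel, exp_zero, mul_one, sq]

lemma abs_log_sum_exp_le {γ : Type*} [Fintype γ] [Nonempty γ] (h : γ → ℝ) :
    |log (∑ i, exp (h i))| ≤ log (Fintype.card γ) + ∑ i, |h i| := by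
  obtain ⟨i₀⟩ := ‹Nonempty γ›
  have hsum : 0 < ∑ i, exp (h i) := Finset.sum_pos (fun _ _ => exp_pos _) Finset.univ_nonempty
  have hcard : (1 : ℝ) ≤ Fintype.card γ := by exact_mod_cast Fintype.card_pos
  have habs : ∀ i, h i ≤ ∑ j, |h j| := fun i =>
    (le_abs_self _).trans (Finset.single_le_sum (fun j _ => abs_nonneg (h j)) (Finset.mem_univ i))
  rw [abs_le]
  constructor
  · have hlow : h i₀ ≤ log (∑ i, exp (h i)) := by
      rw [le_log_iff_exp_le hsum]
      exact Finset.single_le_sum (fun i _ => (exp_pos (h i)).le) (Finset.mem_univ i₀)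
    have := Finset.single_le_sum (fun j _ => abs_nonneg (h j)) (Finset.mem_univ i₀)
    linarith [neg_abs_le (h i₀), log_nonneg hcard]
  · rw [log_le_iff_le_exp hsum, exp_add, exp_log (by positivity)]
    calc ∑ i, exp (h i) ≤ ∑ _i : γ, exp (∑ j, |h j|) :=
          Finset.sum_le_sum fun i _ => exp_le_exp.2 (habs i)
      _ = Fintype.card γ * exp (∑ j, |h j|) := by simp

lemma blkL_blkR_bijective (n : ℕ) :
    Function.Bijective fun S : Cfg (n + 1) => (blkL S, blkR S) := by
  refine (Fintype.bijective_iff_injective_and_card _).2 ⟨fun S S' hS => ?_, ?_⟩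
  · obtain ⟨hL, hR⟩ := Prod.mk.inj hS
    funext i
    by_cases hi : (i : ℕ) < 2 ^ n
    · exact congrFun hL ⟨i, hi⟩
    · have hi' : (i : ℕ) - 2 ^ n < 2 ^ n := by have := i.2; have := pow_succ 2 n; omega
      have hidx : (⟨2 ^ n + ((i : ℕ) - 2 ^ n), by omega⟩ : Fin (2 ^ (n + 1))) = i :=
        Fin.ext (by simp only; omega)
      simpa only [blkR, hidx] using congrFun hR ⟨(i : ℕ) - 2 ^ n, hi'⟩
  · simp [pow_succ, pow_mul]

lemma sum_blkL_mul_blkR {n : ℕ} (f g : Cfg n → ℝ) :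
    ∑ S : Cfg (n + 1), f (blkL S) * g (blkR S) = (∑ T, f T) * ∑ T, g T := by
  rw [Finset.sum_mul_sum, ← Fintype.sum_prod_type']
  exact Fintype.sum_bijective _ (blkL_blkR_bijective n) _ _ fun S => rfl

def energyField (ε : ∀ l : ℕ, ℕ → Cfg l → Ω → ℝ) : (Σ l : ℕ, ℕ × Cfg l) → Ω → ℝ :=
  fun q => ε q.1 q.2.1 q.2.2

section Hamiltonian

variable (σ : ℝ)

lemma hremH_measurable {ε : ∀ l : ℕ, ℕ → Cfg l → Ω → ℝ} (h : ∀ l j c, Measurable (ε l j c))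
    (n : ℕ) : ∀ j S, Measurable (hremH σ ε n j S) := by
  induction n with
  | zero => exact h 0
  | succ n ih => exact fun j S => ((ih _ _).add (ih _ _)).add ((h _ j S).const_mul _)

lemma hremH_integrable {ε : ∀ l : ℕ, ℕ → Cfg l → Ω → ℝ} {μ : Measure Ω}
    (h : ∀ l j c, Integrable (ε l j c) μ) (n : ℕ) : ∀ j S, Integrable (hremH σ ε n j S) μ := by
  induction n with
  | zero => exact h 0
  | succ n ih => exact fun j S => ((ih _ _).add (ih _ _)).add ((h _ j S).const_mul _)

lemma hremH_comp {Ω₁ Ω₂ : Type} (ε : ∀ l : ℕ, ℕ → Cfg l → Ω₂ → ℝ) (V : Ω₁ → Ω₂) (n : ℕ) :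
    ∀ j S, hremH σ (fun l j c => ε l j c ∘ V) n j S = hremH σ ε n j S ∘ V := by
  induction n with
  | zero => exact fun _ _ => rfl
  | succ n ih =>
    intro j S
    funext ω
    simp only [hremH, ih, Function.comp_apply]

lemma hremH_congr {α : Type} {ε ε' : ∀ l : ℕ, ℕ → Cfg l → α → ℝ} (n : ℕ) : ∀ {j j' : ℕ},
    (∀ l ≤ n, ∀ i < 2 ^ (n - l), ∀ c,
      ε l (j * 2 ^ (n - l) + i) c = ε' l (j' * 2 ^ (n - l) + i) c) →
    ∀ S, hremH σ ε n j S = hremH σ ε' n j' S := by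
  induction n with
  | zero =>
    intro j j' h S
    simpa [hremH] using h 0 le_rfl 0 one_pos S
  | succ n ih =>
    intro j j' h S
    have child : ∀ b ≤ 1, ∀ T, hremH σ ε n (2 * j + b) T = hremH σ ε' n (2 * j' + b) T := by
      intro b hb
      refine ih fun l hl i hi c => ?_
      have hpow : 2 ^ (n + 1 - l) = 2 * 2 ^ (n - l) := by
        rw [Nat.sub_add_comm hl, pow_succ, mul_comm]
      have hidx : ∀ m,
          (2 * m + b) * 2 ^ (n - l) + i = m * 2 ^ (n + 1 - l) + (b * 2 ^ (n - l) + i) := by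
        intro m
        rw [hpow]
        ring
      rw [hidx, hidx]
      refine h l (by omega) _ ?_ c
      rw [hpow]
      interval_cases b <;> omega
    have hL := child 0 (by norm_num) (blkL S)
    have hR := child 1 le_rfl (blkR S)
    have htop := h (n + 1) le_rfl 0 (pow_pos two_pos _) S
    simp only [Nat.sub_self, pow_zero, mul_one, add_zero] at htop hL
    simp only [hremH, hL, hR, htop]

lemma hremZ_comp {Ω₁ Ω₂ : Type} (ε : ∀ l : ℕ, ℕ → Cfg l → Ω₂ → ℝ) (V : Ω₁ → Ω₂) (β n) :
    hremZ σ (fun l j c => ε l j c ∘ V) β n = hremZ σ ε β n ∘ V := by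
  funext ω
  simp only [hremZ, hremH_comp, Function.comp_apply]

lemma hremZ_measurable {ε : ∀ l : ℕ, ℕ → Cfg l → Ω → ℝ} (h : ∀ l j c, Measurable (ε l j c))
    (β : ℝ) (n : ℕ) : Measurable (hremZ σ ε β n) :=
  Finset.measurable_sum _ fun S _ => ((hremH_measurable σ h n 0 S).const_mul _).exp

lemma integrable_log_hremZ {ε : ∀ l : ℕ, ℕ → Cfg l → Ω → ℝ} {μ : Measure Ω}
    [IsFiniteMeasure μ] (hmeas : ∀ l j c, Measurable (ε l j c))
    (hint : ∀ l j c, Integrable (ε l j c) μ) (β : ℝ) (n : ℕ) :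
    Integrable (fun ω => log (hremZ σ ε β n ω)) μ := by
  refine Integrable.mono'
    ((integrable_const (log (Fintype.card (Cfg n)))).add
      (integrable_finsetSum Finset.univ fun S _ =>
        ((hremH_integrable σ hint n 0 S).const_mul (-β)).abs))
    (Measurable.aestronglyMeasurable ?_) (ae_of_all _ fun ω => ?_)
  · exact (hremZ_measurable σ hmeas β n).log
  · simpa only [norm_eq_abs, Pi.add_apply, hremZ] using
      abs_log_sum_exp_le fun S => -β * hremH σ ε n 0 S ω

lemma integral_log_hremZ_eq {ε : ∀ l : ℕ, ℕ → Cfg l → Ω → ℝ} {μ : Measure Ω}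
    {Ω' : Type} [MeasurableSpace Ω'] {ε' : ∀ l : ℕ, ℕ → Cfg l → Ω' → ℝ} {ν : Measure Ω'}
    (h : IsStdGaussianIID (energyField ε) μ) (h' : IsStdGaussianIID (energyField ε') ν)
    (β : ℝ) (n : ℕ) :
    ∫ ω, log (hremZ σ ε β n ω) ∂μ = ∫ ω, log (hremZ σ ε' β n ω) ∂ν := by
  let ε₀ : ∀ l : ℕ, ℕ → Cfg l → ((Σ l : ℕ, ℕ × Cfg l) → ℝ) → ℝ := fun l j c x => x ⟨l, j, c⟩
  have hε₀ : ∀ l j c, Measurable (ε₀ l j c) := fun _ _ _ => measurable_pi_apply _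
  have hG : Measurable fun x => log (hremZ σ ε₀ β n x) := (hremZ_measurable σ hε₀ β n).log
  rw [show hremZ σ ε β n = _ from hremZ_comp σ ε₀ (fun ω q => energyField ε q ω) β n,
    show hremZ σ ε' β n = _ from hremZ_comp σ ε₀ (fun ω q => energyField ε' q ω) β n]
  exact h.integral_comp_eq h' hG

/-- The energies of the subtree of block `m` at level `n`, relabelled as the subtree of block
`0`. -/
def blockEnergies (ε : ∀ l : ℕ, ℕ → Cfg l → Ω → ℝ) (n m : ℕ) : ∀ l : ℕ, ℕ → Cfg l → Ω → ℝ :=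
  fun l i c => ε l (m * 2 ^ (n - l) + i) c

def negateLevel (ε : ∀ l : ℕ, ℕ → Cfg l → Ω → ℝ) (n : ℕ) : ∀ l : ℕ, ℕ → Cfg l → Ω → ℝ :=
  fun l j c ω => if l = n then -ε l j c ω else ε l j c ω

lemma hremH_blockEnergies {α : Type} (ε : ∀ l : ℕ, ℕ → Cfg l → α → ℝ) (n m : ℕ) (S : Cfg n) :
    hremH σ (blockEnergies ε n m) n 0 S = hremH σ ε n m S :=
  hremH_congr σ n (fun l _ i _ c => by simp only [blockEnergies, zero_mul, zero_add]) S

lemma hremH_negateLevel_of_lt {α : Type} (ε : ∀ l : ℕ, ℕ → Cfg l → α → ℝ) {n m : ℕ}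
    (hnm : n < m) (j : ℕ) (S : Cfg n) : hremH σ (negateLevel ε m) n j S = hremH σ ε n j S :=
  hremH_congr σ n (fun l hl _ _ c => by
    funext ω
    simp only [negateLevel, if_neg (show l ≠ m by omega)]) S

lemma hremH_succ_zero {α : Type} (ε : ∀ l : ℕ, ℕ → Cfg l → α → ℝ) (n : ℕ) (S : Cfg (n + 1))
    (ω : α) :
    hremH σ ε (n + 1) 0 S ω
      = hremH σ ε n 0 (blkL S) ω + hremH σ (blockEnergies ε n 1) n 0 (blkR S) ω
        + (2 : ℝ) ^ (((n : ℝ) + 1) * (1 - σ) / 2) * ε (n + 1) 0 S ω := by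
  simp only [hremH, hremH_blockEnergies]

lemma hremH_negateLevel_succ_zero {α : Type} (ε : ∀ l : ℕ, ℕ → Cfg l → α → ℝ) (n : ℕ)
    (S : Cfg (n + 1)) (ω : α) :
    hremH σ (negateLevel ε (n + 1)) (n + 1) 0 S ω
      = hremH σ ε n 0 (blkL S) ω + hremH σ (blockEnergies ε n 1) n 0 (blkR S) ω
        - (2 : ℝ) ^ (((n : ℝ) + 1) * (1 - σ) / 2) * ε (n + 1) 0 S ω := by
  simp only [hremH, hremH_negateLevel_of_lt σ ε (Nat.lt_succ_self n), hremH_blockEnergies,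
    negateLevel, ↓reduceIte]
  ring

/-- Cauchy–Schwarz `(∑ w)² ≤ (∑ w e^t) (∑ w e^{-t})`, with `w_S` the Boltzmann weight of the two
halves of `S` and `t_S` its top-level energy term. -/
lemma two_mul_log_hremZ_add_log_hremZ_blockEnergies_le {α : Type}
    (ε : ∀ l : ℕ, ℕ → Cfg l → α → ℝ) (β : ℝ) (n : ℕ) (ω : α) :
    2 * (log (hremZ σ ε β n ω) + log (hremZ σ (blockEnergies ε n 1) β n ω))
      ≤ log (hremZ σ ε β (n + 1) ω) + log (hremZ σ (negateLevel ε (n + 1)) β (n + 1) ω) := by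
  set w : Cfg (n + 1) → ℝ := fun S =>
    exp (-β * (hremH σ ε n 0 (blkL S) ω + hremH σ (blockEnergies ε n 1) n 0 (blkR S) ω))
  set t : Cfg (n + 1) → ℝ := fun S =>
    -β * ((2 : ℝ) ^ (((n : ℝ) + 1) * (1 - σ) / 2) * ε (n + 1) 0 S ω)
  have hw : ∑ S, w S = hremZ σ ε β n ω * hremZ σ (blockEnergies ε n 1) β n ω := by
    simp only [w, hremZ, ← sum_blkL_mul_blkR, ← exp_add, mul_add]
  have hZ : hremZ σ ε β (n + 1) ω = ∑ S, w S * exp (t S) := by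
    simp only [w, t, hremZ, hremH_succ_zero, ← exp_add, mul_add]
  have hZneg : hremZ σ (negateLevel ε (n + 1)) β (n + 1) ω = ∑ S, w S * exp (-t S) := by
    simp only [w, t, hremZ, hremH_negateLevel_succ_zero, ← exp_add, sub_eq_add_neg, mul_add,
      neg_mul_eq_mul_neg]
  have hZpos : ∀ (ε : ∀ l : ℕ, ℕ → Cfg l → α → ℝ) n, 0 < hremZ σ ε β n ω := fun _ _ =>
    Finset.sum_pos (fun _ _ => exp_pos _) Finset.univ_nonempty
  have hcs := sq_sum_le_sum_mul_exp_mul_sum_mul_exp_neg Finset.univ (w := w)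
    (fun S _ => (exp_pos _).le) t
  rw [← hZ, ← hZneg, hw] at hcs
  have hlog := log_le_log (pow_pos (mul_pos (hZpos _ _) (hZpos _ _)) 2) hcs
  rw [log_pow, log_mul (hZpos _ _).ne' (hZpos _ _).ne', log_mul (hZpos _ _).ne' (hZpos _ _).ne']
    at hlog
  exact_mod_cast hlog

lemma IsStdGaussianIID.blockEnergies {ε : ∀ l : ℕ, ℕ → Cfg l → Ω → ℝ} {μ : Measure Ω}
    (h : IsStdGaussianIID (energyField ε) μ) (n m : ℕ) :
    IsStdGaussianIID (energyField (blockEnergies ε n m)) μ := by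
  refine h.precomp
    (g := fun q : Σ l : ℕ, ℕ × Cfg l => ⟨q.1, m * 2 ^ (n - q.1) + q.2.1, q.2.2⟩) ?_
  rintro ⟨l, i, c⟩ ⟨l', i', c'⟩ hq
  obtain ⟨rfl, hq⟩ := Sigma.mk.inj_iff.mp hq
  obtain ⟨hi, rfl⟩ := Prod.mk.inj (eq_of_heq hq)
  rw [Nat.add_left_cancel (m := i) (k := i') hi]

lemma IsStdGaussianIID.negateLevel {ε : ∀ l : ℕ, ℕ → Cfg l → Ω → ℝ} {μ : Measure Ω}
    (h : IsStdGaussianIID (energyField ε) μ) (n : ℕ) :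
    IsStdGaussianIID (energyField (negateLevel ε n)) μ := by
  refine h.comp_of_map_eq (f := fun q x => if q.1 = n then -x else x) (fun q => ?_) fun q => ?_
  · split_ifs
    exacts [measurable_neg, measurable_id]
  · split_ifs
    · rw [gaussianReal_map_neg, neg_zero]
    · exact Measure.map_id

lemma two_mul_integral_log_hremZ_le {ε : ∀ l : ℕ, ℕ → Cfg l → Ω → ℝ} {μ : Measure Ω}
    (h : IsStdGaussianIID (energyField ε) μ) (β : ℝ) (n : ℕ) :
    2 * ∫ ω, log (hremZ σ ε β n ω) ∂μ ≤ ∫ ω, log (hremZ σ ε β (n + 1) ω) ∂μ := by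
  have := h.isProbabilityMeasure
  have hint : ∀ {ε' : ∀ l : ℕ, ℕ → Cfg l → Ω → ℝ}, IsStdGaussianIID (energyField ε') μ →
      ∀ n, Integrable (fun ω => log (hremZ σ ε' β n ω)) μ := fun h' =>
    integrable_log_hremZ σ (fun l j c => h'.measurable ⟨l, j, c⟩)
      (fun l j c => h'.integrable ⟨l, j, c⟩) β
  have hblock := h.blockEnergies n 1
  have hneg := h.negateLevel (n + 1)
  have hmono : ∫ ω, 2 * (log (hremZ σ ε β n ω) + log (hremZ σ (blockEnergies ε n 1) β n ω)) ∂μ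
      ≤ ∫ ω, (log (hremZ σ ε β (n + 1) ω)
        + log (hremZ σ (negateLevel ε (n + 1)) β (n + 1) ω)) ∂μ :=
    integral_mono (((hint h n).add (hint hblock n)).const_mul 2)
      ((hint h (n + 1)).add (hint hneg (n + 1)))
      (two_mul_log_hremZ_add_log_hremZ_blockEnergies_le σ ε β n)
  rw [integral_const_mul, integral_add (hint h n) (hint hblock n),
    integral_add (hint h _) (hint hneg _), integral_log_hremZ_eq σ hblock h,
    integral_log_hremZ_eq σ hneg h] at hmono
  linarith

end Hamiltonian

theorem hremF_monotone_general
    (σ β : ℝ) (μ : Measure Ω)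
    (ε : ∀ l : ℕ, ℕ → Cfg l → Ω → ℝ)
    (hmeas : ∀ l j c, Measurable (ε l j c))
    (hgauss : ∀ l j c, μ.map (ε l j c) = gaussianReal 0 1)
    (hindep : iIndepFun
      (fun q : Σ l : ℕ, ℕ × Cfg l => ε q.1 q.2.1 q.2.2) μ) :
    ∀ k : ℕ, hremF σ ε μ β k ≤ hremF σ ε μ β (k + 1) := by
  intro k
  have h : IsStdGaussianIID (energyField ε) μ :=
    ⟨fun _ => hmeas _ _ _, fun _ => hgauss _ _ _, hindep⟩
  have hk := two_mul_integral_log_hremZ_le σ h β k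
  calc hremF σ ε μ β k = ((2 : ℝ) ^ (k + 1))⁻¹ * (2 * ∫ ω, log (hremZ σ ε β k ω) ∂μ) := by
        rw [hremF, pow_succ, mul_inv, mul_assoc, inv_mul_cancel_left₀ two_ne_zero]
    _ ≤ hremF σ ε μ β (k + 1) := mul_le_mul_of_nonneg_left hk (by positivity)

/-- **Monotonicity of the HREM free energy.** For the HREM (with i.i.d. standard Gaussian
random energies `ε`), the quenched free energy sequence is non-decreasing in system size:
`f_{k+1} ≥ f_k` for all `k ≥ 0` and all `β ≥ 0`. -/
theorem hremF_monotone
    (σ β : ℝ) (hβ : 0 ≤ β) (μ : Measure Ω) [IsProbabilityMeasure μ]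
    (ε : ∀ l : ℕ, ℕ → Cfg l → Ω → ℝ)
    (hmeas : ∀ l j c, Measurable (ε l j c))
    (hgauss : ∀ l j c, μ.map (ε l j c) = gaussianReal 0 1)
    (hindep : iIndepFun
      (fun q : Σ l : ℕ, ℕ × Cfg l => ε q.1 q.2.1 q.2.2) μ) :
    ∀ k : ℕ, hremF σ ε μ β k ≤ hremF σ ε μ β (k + 1) :=
  hremF_monotone_general σ β μ ε hmeas hgauss hindep
end

section
/- For the HREM with σ > 0, the finite-volume entropy satisfies s_{k+1} ≥ f_{k+1} - β·√((2^σ/(2^σ - 1))·2 log 2) for every k and every β ≥ 0. -/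
open MeasureTheory ProbabilityTheory Real Filter

variable {Ω : Type} [MeasurableSpace Ω]

/-- The finite-volume entropy of the HREM:
\`s_n = β · 2^{-n} E[⟨H_n[S]⟩] + f_n\`, where \`⟨·⟩\` is the Gibbs average. -/
noncomputable def hremS (σ : ℝ) (ε : ∀ l : ℕ, ℕ → Cfg l → Ω → ℝ) (μ : Measure Ω)
    (β : ℝ) (n : ℕ) : ℝ :=
  β * ((2 : ℝ) ^ n)⁻¹
      * ∫ ω, (∑ S : Cfg n, hremH σ ε n 0 S ω * Real.exp (-β * hremH σ ε n 0 S ω))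
          / hremZ σ ε β n ω ∂μ
    + hremF σ ε μ β n

/-!
The Gibbs average of the energies is at least their minimum, and for every `t > 0`
`min_S H[S] ≥ -t⁻¹ log ∑_S exp (-t H[S])`. Each `H_n[S]` is a linear combination of
independent standard Gaussians, one for each of its `2^{n-l}` sub-blocks of level `l ≤ n`, so it
is sub-Gaussian with variance proxy `v = ∑_{l ≤ n} 2^{n-l} 2^{l(1-σ)} ≤ 2^n 2^σ/(2^σ-1)`. Jensen's inequality
gives `E log ∑_S exp (-t H[S]) ≤ log N + v t²/2` with `N = 2^{2^n}` configurations, and the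
choice `t = √(2 log N / v)` yields `E⟨H_n⟩ ≥ -√(2 v log N) = -2^n √(2^σ/(2^σ-1) · 2 log 2)`.
-/

open scoped NNReal
open Finset

namespace ProbabilityTheory

variable {X : Ω → ℝ} {μ : Measure Ω}

lemma HasSubgaussianMGF.mono {c d : ℝ≥0} (h : HasSubgaussianMGF X c μ) (hcd : c ≤ d) :
    HasSubgaussianMGF X d μ where
  integrable_exp_mul := h.integrable_exp_mul
  mgf_le t := (h.mgf_le t).trans <| exp_le_exp.2 <| by gcongr

lemma hasSubgaussianMGF_of_map_eq_gaussianReal (hX : AEMeasurable X μ) {v : ℝ≥0}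
    (h : μ.map X = gaussianReal 0 v) : HasSubgaussianMGF X v μ := by
  rw [← HasSubgaussianMGF.id_map_iff hX, h]
  exact ⟨integrable_exp_mul_gaussianReal, fun t => by simp [mgf_id_gaussianReal]⟩

lemma integral_le_log_integral_exp [IsProbabilityMeasure μ] (hX : Integrable X μ)
    (hexp : Integrable (fun ω => exp (X ω)) μ) :
    ∫ ω, X ω ∂μ ≤ log (∫ ω, exp (X ω) ∂μ) :=
  (le_log_iff_exp_le (integral_exp_pos hexp)).2 <|
    convexOn_exp.map_integral_le continuous_exp.continuousOn isClosed_univ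
      (ae_of_all _ fun _ => Set.mem_univ _) hX hexp

end ProbabilityTheory

section LogSumExp

variable {ι : Type*} [Fintype ι]

lemma le_log_sum_exp (x : ι → ℝ) (i : ι) : x i ≤ log (∑ j, exp (x j)) :=
  (le_log_iff_exp_le (sum_pos (fun _ _ => exp_pos _) ⟨i, mem_univ i⟩)).2 <|
    single_le_sum (f := fun j => exp (x j)) (fun _ _ => (exp_pos _).le) (mem_univ i)

variable [Nonempty ι] {μ : Measure Ω} {X : ι → Ω → ℝ}

lemma integrable_log_sum_exp (hX : ∀ i, Integrable (X i) μ)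
    (hexp : ∀ i, Integrable (fun ω => exp (X i ω)) μ) :
    Integrable (fun ω => log (∑ i, exp (X i ω))) μ := by
  obtain ⟨i₀⟩ := ‹Nonempty ι›
  have hsum : Integrable (fun ω => ∑ i, exp (X i ω)) μ := integrable_finsetSum _ fun i _ => hexp i
  refine Integrable.mono' ((hX i₀).abs.add hsum)
    hsum.aestronglyMeasurable.aemeasurable.log.aestronglyMeasurable (ae_of_all _ fun ω => ?_)
  have hpos : 0 < ∑ i, exp (X i ω) := sum_pos (fun _ _ => exp_pos _) univ_nonempty
  have hlow := le_log_sum_exp (X · ω) i₀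
  have hup := log_le_sub_one_of_pos hpos
  rw [Real.norm_eq_abs, abs_le, Pi.add_apply]
  constructor <;> linarith [neg_abs_le (X i₀ ω), le_abs_self (X i₀ ω)]

lemma integral_log_sum_exp_le [IsProbabilityMeasure μ] (hX : ∀ i, Integrable (X i) μ)
    (hexp : ∀ i, Integrable (fun ω => exp (X i ω)) μ) :
    ∫ ω, log (∑ i, exp (X i ω)) ∂μ ≤ log (∑ i, ∫ ω, exp (X i ω) ∂μ) := by
  have hpos : ∀ ω, 0 < ∑ i, exp (X i ω) := fun ω => sum_pos (fun _ _ => exp_pos _) univ_nonempty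
  have h := integral_le_log_integral_exp (integrable_log_sum_exp hX hexp)
    (by simpa only [exp_log (hpos _)] using integrable_finsetSum _ fun i _ => hexp i)
  simpa only [exp_log (hpos _), integral_finsetSum _ fun i _ => hexp i] using h

end LogSumExp

section Gibbs

variable {ι : Type*} [Fintype ι]

noncomputable def gibbsAverage (β : ℝ) (E : ι → ℝ) : ℝ :=
  (∑ i, E i * exp (-β * E i)) / ∑ i, exp (-β * E i)

lemma le_gibbsAverage [Nonempty ι] {β m : ℝ} {E : ι → ℝ} (h : ∀ i, m ≤ E i) :
    m ≤ gibbsAverage β E := by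
  rw [gibbsAverage, le_div_iff₀ (sum_pos (fun _ _ => exp_pos _) univ_nonempty), mul_sum]
  exact sum_le_sum fun i _ => mul_le_mul_of_nonneg_right (h i) (exp_pos _).le

lemma neg_log_sum_exp_div_le {t : ℝ} (ht : 0 < t) (E : ι → ℝ) (i : ι) :
    -log (∑ j, exp (-t * E j)) / t ≤ E i := by
  have := le_log_sum_exp (fun j => -t * E j) i
  rw [div_le_iff₀ ht]
  linarith

variable {μ : Measure Ω} [IsProbabilityMeasure μ] {H : ι → Ω → ℝ} {c : ℝ≥0}

lemma le_integral_gibbsAverage [Nonempty ι] (hH : ∀ i, HasSubgaussianMGF (H i) c μ) (β : ℝ)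
    {t : ℝ} (ht : 0 < t) :
    -(log (Fintype.card ι) + c * t ^ 2 / 2) / t ≤ ∫ ω, gibbsAverage β (fun i => H i ω) ∂μ := by
  have hlog : ∫ ω, log (∑ i, exp (-t * H i ω)) ∂μ ≤ log (Fintype.card ι) + c * t ^ 2 / 2 :=
    calc ∫ ω, log (∑ i, exp (-t * H i ω)) ∂μ ≤ log (∑ i, mgf (H i) μ (-t)) :=
          integral_log_sum_exp_le (fun i => (hH i).integrable.const_mul _)
            fun i => (hH i).integrable_exp_mul _
      _ ≤ log (∑ _i : ι, exp (c * (-t) ^ 2 / 2)) :=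
          log_le_log (sum_pos (fun i _ => mgf_pos ((hH i).integrable_exp_mul _)) univ_nonempty)
            (sum_le_sum fun i _ => (hH i).mgf_le _)
      _ = log (Fintype.card ι) + c * t ^ 2 / 2 := by
          rw [sum_const, card_univ, nsmul_eq_mul, log_mul (by positivity) (exp_pos _).ne',
            log_exp, neg_sq]
  have hlogint : Integrable (fun ω => log (∑ i, exp (-t * H i ω))) μ :=
    integrable_log_sum_exp (fun i => (hH i).integrable.const_mul _)
      fun i => (hH i).integrable_exp_mul _
  by_cases hint : Integrable (fun ω => gibbsAverage β (fun i => H i ω)) μ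
  · calc -(log (Fintype.card ι) + c * t ^ 2 / 2) / t
          ≤ ∫ ω, -log (∑ i, exp (-t * H i ω)) / t ∂μ := by
            rw [integral_div, integral_neg]
            gcongr
      _ ≤ ∫ ω, gibbsAverage β (fun i => H i ω) ∂μ :=
          integral_mono (hlogint.neg.div_const t) hint fun ω =>
            le_gibbsAverage fun i => neg_log_sum_exp_div_le ht (H · ω) i
  · -- the Bochner integral of a non-integrable function is `0`
    rw [integral_undef hint, neg_div, neg_nonpos]
    have := log_nonneg (show (1 : ℝ) ≤ Fintype.card ι by exact_mod_cast Fintype.card_pos)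
    positivity

lemma neg_sqrt_le_integral_gibbsAverage [Nontrivial ι] (hH : ∀ i, HasSubgaussianMGF (H i) c μ)
    (hc : 0 < c) (β : ℝ) :
    -√(2 * c * log (Fintype.card ι)) ≤ ∫ ω, gibbsAverage β (fun i => H i ω) ∂μ := by
  set L := log (Fintype.card ι)
  have hL : 0 < L := log_pos (by exact_mod_cast Fintype.one_lt_card)
  have hc' : (0 : ℝ) < c := hc
  set t := √(2 * L / c)
  have ht : 0 < t := sqrt_pos.2 (by positivity)
  have ht2 : t ^ 2 = 2 * L / c := sq_sqrt (by positivity)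
  have hprod : √(2 * c * L) * t = 2 * L := by
    rw [← sqrt_mul (by positivity), show 2 * c * L * (2 * L / c) = (2 * L) ^ 2 by field_simp,
      sqrt_sq (by positivity)]
  convert le_integral_gibbsAverage hH β ht using 1
  rw [ht2, eq_div_iff ht.ne']
  field_simp
  linarith

end Gibbs

section HREM

abbrev HremIndex : Type := Σ l : ℕ, ℕ × Cfg l

def hremSupport : (n : ℕ) → ℕ → Cfg n → Finset HremIndex
  | 0, j, S => {⟨0, j, S⟩}
  | n + 1, j, S =>
      hremSupport n (2 * j) (blkL S) ∪ hremSupport n (2 * j + 1) (blkR S) ∪ {⟨n + 1, j, S⟩}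

-- The level-`l` descendants of block `j` at depth `n` are the blocks `j * 2 ^ (n - l) + r`
-- with `r < 2 ^ (n - l)`.
lemma le_and_div_eq_of_mem_hremSupport :
    ∀ {n j : ℕ} {S : Cfg n} {q : HremIndex}, q ∈ hremSupport n j S →
      q.1 ≤ n ∧ q.2.1 / 2 ^ (n - q.1) = j
  | 0, j, S, q, hq => by
    rw [hremSupport, mem_singleton] at hq
    subst hq
    simp
  | n + 1, j, S, q, hq => by
    have of_child {j' : ℕ} {S' : Cfg n} (hj' : j' / 2 = j) (hq' : q ∈ hremSupport n j' S') :
        q.1 ≤ n + 1 ∧ q.2.1 / 2 ^ (n + 1 - q.1) = j := by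
      obtain ⟨hle, hdiv⟩ := le_and_div_eq_of_mem_hremSupport hq'
      refine ⟨by omega, ?_⟩
      rw [Nat.sub_add_comm hle, pow_succ, ← Nat.div_div_eq_div_mul, hdiv, hj']
    simp only [hremSupport, mem_union, mem_singleton] at hq
    rcases hq with (hq | hq) | rfl
    · exact of_child (by omega) hq
    · exact of_child (by omega) hq
    · simp

lemma sum_hremSupport_succ {M : Type*} [AddCommMonoid M] (f : HremIndex → M) (n j : ℕ)
    (S : Cfg (n + 1)) :
    ∑ q ∈ hremSupport (n + 1) j S, f q =
      ∑ q ∈ hremSupport n (2 * j) (blkL S), f q + ∑ q ∈ hremSupport n (2 * j + 1) (blkR S), f q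
        + f ⟨n + 1, j, S⟩ := by
  have hLR : Disjoint (hremSupport n (2 * j) (blkL S)) (hremSupport n (2 * j + 1) (blkR S)) :=
    disjoint_left.2 fun q hL hR => by
      have := (le_and_div_eq_of_mem_hremSupport hL).2
      have := (le_and_div_eq_of_mem_hremSupport hR).2
      omega
  have hnew : Disjoint (hremSupport n (2 * j) (blkL S) ∪ hremSupport n (2 * j + 1) (blkR S))
      {⟨n + 1, j, S⟩} := by
    refine disjoint_singleton_right.2 fun h => ?_
    rcases mem_union.1 h with h | h <;> simpa using (le_and_div_eq_of_mem_hremSupport h).1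
  rw [hremSupport, sum_union hnew, sum_union hLR, sum_singleton]

noncomputable def hremCoeff (σ : ℝ) (l : ℕ) : ℝ := (2 : ℝ) ^ ((l : ℝ) * (1 - σ) / 2)

omit [MeasurableSpace Ω] in
lemma hremH_eq_sum (σ : ℝ) (ε : ∀ l : ℕ, ℕ → Cfg l → Ω → ℝ) (n j : ℕ) (S : Cfg n) (ω : Ω) :
    hremH σ ε n j S ω = ∑ q ∈ hremSupport n j S, hremCoeff σ q.1 * ε q.1 q.2.1 q.2.2 ω := by
  induction n generalizing j with
  | zero => simp [hremH, hremSupport, hremCoeff]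
  | succ n ih =>
    simp only [hremH]
    rw [sum_hremSupport_succ, ih, ih, hremCoeff]
    push_cast
    rfl

lemma hremCoeff_sq (σ : ℝ) (l : ℕ) : hremCoeff σ l ^ 2 = 2 ^ l * ((2 : ℝ) ^ σ)⁻¹ ^ l := by
  have h : (2 : ℝ) * ((2 : ℝ) ^ σ)⁻¹ = 2 ^ (1 - σ) := by
    rw [rpow_sub two_pos, rpow_one, div_eq_mul_inv]
  rw [← mul_pow, h, hremCoeff]
  simp only [← rpow_natCast, ← rpow_mul zero_le_two]
  ring_nf

lemma sum_hremSupport_hremCoeff_sq (σ : ℝ) (n j : ℕ) (S : Cfg n) :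
    ∑ q ∈ hremSupport n j S, hremCoeff σ q.1 ^ 2 =
      2 ^ n * ∑ l ∈ range (n + 1), ((2 : ℝ) ^ σ)⁻¹ ^ l := by
  induction n generalizing j with
  | zero => simp [hremSupport, hremCoeff_sq]
  | succ n ih =>
    rw [sum_hremSupport_succ, ih, ih, hremCoeff_sq, sum_range_succ _ (n + 1)]
    ring

lemma geom_sum_inv_le {x : ℝ} (hx : 1 < x) (n : ℕ) : ∑ l ∈ range n, x⁻¹ ^ l ≤ x / (x - 1) := by
  have h := geom_sum_Ico_le_of_lt_one (m := 0) (n := n) (inv_nonneg.2 (by linarith))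
    (inv_lt_one_of_one_lt₀ hx)
  rwa [← range_eq_Ico, pow_zero, one_div, show (1 - x⁻¹)⁻¹ = x / (x - 1) by field_simp] at h

lemma sum_hremSupport_hremCoeff_sq_le {σ : ℝ} (hσ : 0 < σ) (n j : ℕ) (S : Cfg n) :
    ∑ q ∈ hremSupport n j S, hremCoeff σ q.1 ^ 2 ≤ 2 ^ n * ((2 : ℝ) ^ σ / ((2 : ℝ) ^ σ - 1)) := by
  rw [sum_hremSupport_hremCoeff_sq]
  gcongr
  exact geom_sum_inv_le (one_lt_rpow one_lt_two hσ) _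

lemma hasSubgaussianMGF_hremH {σ : ℝ} {μ : Measure Ω} {ε : ∀ l : ℕ, ℕ → Cfg l → Ω → ℝ}
    (hmeas : ∀ l j c, Measurable (ε l j c))
    (hgauss : ∀ l j c, μ.map (ε l j c) = gaussianReal 0 1)
    (hindep : iIndepFun (fun q : HremIndex => ε q.1 q.2.1 q.2.2) μ) (n j : ℕ) (S : Cfg n) :
    HasSubgaussianMGF (fun ω => hremH σ ε n j S ω)
      (∑ q ∈ hremSupport n j S, hremCoeff σ q.1 ^ 2).toNNReal μ := by
  have hterm (q : HremIndex) : HasSubgaussianMGF (fun ω => hremCoeff σ q.1 * ε q.1 q.2.1 q.2.2 ω)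
      (hremCoeff σ q.1 ^ 2).toNNReal μ := by
    convert (hasSubgaussianMGF_of_map_eq_gaussianReal (hmeas _ _ _).aemeasurable
      (hgauss _ _ _)).const_mul (hremCoeff σ q.1) using 1
    exact (Real.toNNReal_of_nonneg (sq_nonneg _)).trans (mul_one _).symm
  have hsum := HasSubgaussianMGF.sum_of_iIndepFun
    (hindep.comp (fun q x => hremCoeff σ q.1 * x) fun _ => measurable_const_mul _)
    (s := hremSupport n j S) fun q _ => hterm q
  rw [Real.toNNReal_sum_of_nonneg fun _ _ => sq_nonneg _]
  convert hsum using 2 with ω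
  exact hremH_eq_sum σ ε n j S ω

lemma hremS_eq_integral_gibbsAverage (σ : ℝ) (ε : ∀ l : ℕ, ℕ → Cfg l → Ω → ℝ) (μ : Measure Ω)
    (β : ℝ) (n : ℕ) :
    hremS σ ε μ β n =
      β * ((2 : ℝ) ^ n)⁻¹ * ∫ ω, gibbsAverage β (fun S => hremH σ ε n 0 S ω) ∂μ
        + hremF σ ε μ β n :=
  rfl

lemma log_card_cfg (n : ℕ) : log (Fintype.card (Cfg n)) = 2 ^ n * log 2 := by
  simp [Real.log_pow]

end HREM

/-- **Lower bound on the finite-volume entropy of the HREM.** For `σ > 0`,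
`s_{k+1} ≥ f_{k+1} - β √((2^σ/(2^σ-1)) · 2 log 2)` for every `k` and every `β ≥ 0`. -/
theorem hremS_lower_bound
    (σ β : ℝ) (hσ : 0 < σ) (hβ : 0 ≤ β) (μ : Measure Ω) [IsProbabilityMeasure μ]
    (ε : ∀ l : ℕ, ℕ → Cfg l → Ω → ℝ)
    (hmeas : ∀ l j c, Measurable (ε l j c))
    (hgauss : ∀ l j c, μ.map (ε l j c) = gaussianReal 0 1)
    (hindep : iIndepFun
      (fun q : Σ l : ℕ, ℕ × Cfg l => ε q.1 q.2.1 q.2.2) μ) :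
    ∀ k : ℕ, hremS σ ε μ β (k + 1)
      ≥ hremF σ ε μ β (k + 1)
        - β * Real.sqrt ((2 : ℝ) ^ σ / ((2 : ℝ) ^ σ - 1) * (2 * Real.log 2)) := by
  intro k
  set n := k + 1
  set C := (2 : ℝ) ^ σ / ((2 : ℝ) ^ σ - 1)
  have hC : 0 < C := div_pos (by positivity) (by linarith [one_lt_rpow one_lt_two hσ])
  have hsub (S : Cfg n) :
      HasSubgaussianMGF (fun ω => hremH σ ε n 0 S ω) (2 ^ n * C).toNNReal μ :=
    (hasSubgaussianMGF_hremH hmeas hgauss hindep n 0 S).mono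
      (Real.toNNReal_le_toNNReal (sum_hremSupport_hremCoeff_sq_le hσ n 0 S))
  have hgibbs := neg_sqrt_le_integral_gibbsAverage hsub (Real.toNNReal_pos.2 (by positivity)) β
  have hsqrt : √(2 * (2 ^ n * C).toNNReal * log (Fintype.card (Cfg n))) =
      2 ^ n * √(C * (2 * log 2)) := by
    rw [Real.coe_toNNReal _ (by positivity), log_card_cfg,
      show 2 * (2 ^ n * C) * (2 ^ n * log 2) = (2 ^ n) ^ 2 * (C * (2 * log 2)) by ring,
      sqrt_mul (by positivity), sqrt_sq (by positivity)]
  rw [hsqrt] at hgibbs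
  have hmean : -√(C * (2 * log 2)) ≤ ((2 : ℝ) ^ n)⁻¹ *
      ∫ ω, gibbsAverage β (fun S => hremH σ ε n 0 S ω) ∂μ := by
    rw [le_inv_mul_iff₀ (by positivity)]
    linarith
  rw [ge_iff_le, hremS_eq_integral_gibbsAverage]
  linarith [mul_le_mul_of_nonneg_left hmean hβ]
end
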